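/- arXiv:1903.05327 — 9 statements merged into one kernel-verified Lean document; each statement's English description precedes it below -/
import Mathlib

section
/- For all r ∈ (0,1) and all real θ, x, the quantity 2r(1 + log r − r² + r² log r)·cos(θ+x) + r⁴ − 4r² log r − 1 is negative. -/
/-!
Write `L = log r < 0` and `c = cos (θ + x)`. The quantity is affine in `c` and equals
`2r(1 + L - r² + r²L)(c + 1) + (r + 1)²(r² - 1 - 2rL)`.
Both summands are controlled by classical bounds on the logarithm on `(0, 1)`:
`r - r⁻¹ < 2 log r` (which is `t < sinh t` for `t = -log r`) makes the second one negative, and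
`log s < 2(s - 1)/(s + 1)` at `s = r²` (the artanh series) gives `(1 + r²) L < r² - 1`, so the
coefficient `1 + L - r² + r²L` of `c + 1 ≥ 0` is negative.
-/

open Real

namespace Real

theorem sub_inv_lt_two_mul_log {r : ℝ} (hr0 : 0 < r) (hr1 : r < 1) :
    r - r⁻¹ < 2 * log r := by
  have h := self_lt_sinh_iff.mpr (neg_pos.mpr (log_neg hr0 hr1))
  rw [sinh_eq, neg_neg, exp_log hr0, exp_neg, exp_log hr0] at h
  linarith

theorem log_lt_two_mul_sub_one_div_add_one {s : ℝ} (hs0 : 0 < s) (hs1 : s < 1) :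
    log s < 2 * (s - 1) / (s + 1) := by
  set y := (1 - s) / (1 + s) with hy
  have hy0 : 0 < y := div_pos (by linarith) (by linarith)
  have hy1 : y < 1 := (div_lt_one (by linarith)).mpr (by linarith)
  have hdiv : (1 + y) / (1 - y) = s⁻¹ := by
    have : s ≠ 0 := hs0.ne'
    rw [div_eq_iff (sub_pos.mpr hy1).ne', hy]
    field_simp
    ring
  -- the first two terms `y + y³/3` of the series of `artanh y = ½ log ((1 + y)/(1 - y))`
  have hseries := sum_range_le_log_div hy0.le hy1 2
  rw [hdiv, log_inv] at hseries
  simp only [Finset.sum_range_succ, Finset.sum_range_zero] at hseries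
  have hrhs : 2 * (s - 1) / (s + 1) = -2 * y := by
    rw [hy]; field_simp; ring
  rw [hrhs]
  nlinarith [pow_pos hy0 3]

theorem one_add_sq_mul_log_lt_sq_sub_one {r : ℝ} (hr0 : 0 < r) (hr1 : r < 1) :
    (1 + r ^ 2) * log r < r ^ 2 - 1 := by
  have h := log_lt_two_mul_sub_one_div_add_one (pow_pos hr0 2) (pow_lt_one₀ hr0.le hr1 two_ne_zero)
  rw [log_pow, lt_div_iff₀ (by positivity)] at h
  push_cast at h
  linarith

end Real

theorem stmt_2 (r : ℝ) (hr0 : 0 < r) (hr1 : r < 1) (θ x : ℝ) :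
    2 * r * (1 + Real.log r - r ^ 2 + r ^ 2 * Real.log r) * Real.cos (θ + x)
      + r ^ 4 - 4 * r ^ 2 * Real.log r - 1 < 0 := by
  set L := log r
  set c := cos (θ + x)
  have hsinh : r ^ 2 - 1 < 2 * r * L := by
    have h := mul_lt_mul_of_pos_left (sub_inv_lt_two_mul_log hr0 hr1) hr0
    rwa [mul_sub, mul_inv_cancel₀ hr0.ne', ← sq, ← mul_assoc, mul_comm r 2] at h
  have hcoeff : 1 + L - r ^ 2 + r ^ 2 * L < 0 := by
    linarith [one_add_sq_mul_log_lt_sq_sub_one hr0 hr1]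
  have hc : 0 ≤ c + 1 := by linarith [neg_one_le_cos (θ + x)]
  have hsplit : 2 * r * (1 + L - r ^ 2 + r ^ 2 * L) * c + r ^ 4 - 4 * r ^ 2 * L - 1
      = 2 * r * (1 + L - r ^ 2 + r ^ 2 * L) * (c + 1) + (r + 1) ^ 2 * (r ^ 2 - 1 - 2 * r * L) := by
    ring
  rw [hsplit]
  have hfirst : 2 * r * (1 + L - r ^ 2 + r ^ 2 * L) * (c + 1) ≤ 0 :=
    mul_nonpos_of_nonpos_of_nonneg (mul_nonpos_of_nonneg_of_nonpos (by positivity) hcoeff.le) hc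
  have hsecond : (r + 1) ^ 2 * (r ^ 2 - 1 - 2 * r * L) < 0 :=
    mul_neg_of_pos_of_neg (by positivity) (by linarith)
  linarith
end

section
/- The function f(r) = (1−r) / ((1+r)·(−2 log r)) is strictly increasing on (0,1), tends to 0 as r → 0⁺, and tends to 1/4 as r → 1⁻. -/
/-!
Writing `f r = (1 - r) / ((1 + r) * (-2 log r))`, the quotient rule gives
`f' r = 2 φ(r) / (r ((1 + r) (-2 log r))²)` with `φ(r) = 1 - r² + 2 r log r`. Since
`φ' = 2 (log r + 1 - r) < 0` and `φ(1) = 0`, `φ` is positive on `(0, 1)`, so `f` increases.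
As `r → 0⁺` the denominator blows up; as `r → 1⁻`, `log r / (r - 1) → log' 1 = 1`, so
`f r = 1 / (2 (1 + r) · log r / (r - 1)) → 1 / 4`.
-/

open Filter Topology Real Set

lemma one_sub_sq_add_two_mul_mul_log_pos {x : ℝ} (hx₀ : 0 < x) (hx₁ : x < 1) :
    0 < 1 - x ^ 2 + 2 * x * log x := by
  have hanti : StrictAntiOn (fun x : ℝ => 1 - x ^ 2 + 2 * x * log x) (Ioc 0 1) := by
    have hderiv : ∀ y, 0 < y →
        HasDerivAt (fun x : ℝ => 1 - x ^ 2 + 2 * x * log x) (2 * (log y + 1 - y)) y := by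
      intro y hy
      refine (((hasDerivAt_pow 2 y).const_sub 1).add
        (((hasDerivAt_id' y).const_mul 2).mul (hasDerivAt_log hy.ne'))).congr_deriv ?_
      field_simp
      ring
    refine strictAntiOn_of_hasDerivWithinAt_neg (convex_Ioc 0 1)
      (fun y hy => (hderiv y hy.1).continuousAt.continuousWithinAt)
      (fun y hy => (hderiv y (interior_subset hy).1).hasDerivWithinAt) fun y hy => ?_
    rw [interior_Ioc] at hy
    linarith [log_lt_sub_one_of_pos hy.1 hy.2.ne]
  simpa using hanti ⟨hx₀, hx₁.le⟩ ⟨one_pos, le_rfl⟩ hx₁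

lemma hasDerivAt_one_sub_div_one_add_mul_neg_two_mul_log {x : ℝ} (hx₀ : 0 < x)
    (hx₁ : x ≠ 1) :
    HasDerivAt (fun r : ℝ => (1 - r) / ((1 + r) * (-2 * log r)))
      (2 * (1 - x ^ 2 + 2 * x * log x) / (x * ((1 + x) * (-2 * log x)) ^ 2)) x := by
  have hlog : log x ≠ 0 := log_ne_zero_of_pos_of_ne_one hx₀ hx₁
  have hden : (1 + x) * (-2 * log x) ≠ 0 := by
    have : 1 + x ≠ 0 := by linarith
    positivity
  refine (((hasDerivAt_id' x).const_sub 1).div (((hasDerivAt_id' x).const_add 1).mul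
    ((hasDerivAt_log hx₀.ne').const_mul (-2))) hden).congr_deriv ?_
  simp only [Pi.mul_apply]
  field_simp
  ring

lemma strictMonoOn_one_sub_div_one_add_mul_neg_two_mul_log :
    StrictMonoOn (fun r : ℝ => (1 - r) / ((1 + r) * (-2 * log r))) (Ioo 0 1) := by
  have hderiv : ∀ x ∈ Ioo (0 : ℝ) 1,
      HasDerivAt (fun r : ℝ => (1 - r) / ((1 + r) * (-2 * log r)))
      (2 * (1 - x ^ 2 + 2 * x * log x) / (x * ((1 + x) * (-2 * log x)) ^ 2)) x :=
    fun x hx => hasDerivAt_one_sub_div_one_add_mul_neg_two_mul_log hx.1 hx.2.ne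
  refine strictMonoOn_of_hasDerivWithinAt_pos (convex_Ioo 0 1)
    (fun x hx => (hderiv x hx).continuousAt.continuousWithinAt)
    (fun x hx => (hderiv x (interior_subset hx)).hasDerivWithinAt) fun x hx => ?_
  rw [interior_Ioo] at hx
  obtain ⟨hx₀, hx₁⟩ := hx
  have hden : 0 < (1 + x) * (-2 * log x) :=
    mul_pos (by linarith) (by linarith [log_neg hx₀ hx₁])
  have := one_sub_sq_add_two_mul_mul_log_pos hx₀ hx₁
  positivity

lemma tendsto_one_sub_div_one_add_mul_neg_two_mul_log_nhdsGT_zero :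
    Tendsto (fun r : ℝ => (1 - r) / ((1 + r) * (-2 * log r))) (𝓝[>] 0) (𝓝 0) := by
  have hnum : Tendsto (fun r : ℝ => 1 - r) (𝓝[>] 0) (𝓝 1) :=
    ((by fun_prop : Continuous fun r : ℝ => 1 - r).tendsto' 0 1 (by simp)).mono_left
      nhdsWithin_le_nhds
  have hfactor : Tendsto (fun r : ℝ => 1 + r) (𝓝[>] 0) (𝓝 1) :=
    ((by fun_prop : Continuous fun r : ℝ => 1 + r).tendsto' 0 1 (by simp)).mono_left
      nhdsWithin_le_nhds
  exact hnum.div_atTop (hfactor.pos_mul_atTop one_pos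
    (tendsto_log_nhdsGT_zero.const_mul_atBot_of_neg (by norm_num)))

lemma tendsto_log_div_sub_one_nhdsNE_one :
    Tendsto (fun r : ℝ => log r / (r - 1)) (𝓝[≠] 1) (𝓝 1) := by
  have hderiv : HasDerivAt log 1 1 := by simpa using hasDerivAt_log one_ne_zero
  refine hderiv.tendsto_slope.congr fun r => ?_
  rw [slope_def_field, log_one, sub_zero]

lemma tendsto_one_sub_div_one_add_mul_neg_two_mul_log_nhdsLT_one :
    Tendsto (fun r : ℝ => (1 - r) / ((1 + r) * (-2 * log r))) (𝓝[<] 1) (𝓝 (1 / 4)) := by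
  -- valid for every `r`: where `r = 1` or `log r = 0`, both sides are `0` by `x / 0 = 0`
  have hrw : ∀ r : ℝ,
      (1 - r) / ((1 + r) * (-2 * log r)) = (2 * (1 + r) * (log r / (r - 1)))⁻¹ := by
    intro r
    rw [← mul_div_assoc, inv_div, ← neg_div_neg_eq]
    ring
  have hfactor : Tendsto (fun r : ℝ => 2 * (1 + r)) (𝓝[≠] 1) (𝓝 (2 * (1 + 1))) :=
    ((by fun_prop : Continuous fun r : ℝ => 2 * (1 + r)).tendsto 1).mono_left nhdsWithin_le_nhds
  have hlim := ((hfactor.mul tendsto_log_div_sub_one_nhdsNE_one).inv₀ (by norm_num)).mono_left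
    (nhdsWithin_mono 1 fun r (hr : r < 1) => hr.ne)
  rw [show (2 * (1 + 1) * 1 : ℝ)⁻¹ = 1 / 4 by norm_num] at hlim
  exact hlim.congr fun r => (hrw r).symm

theorem stmt_3 :
    StrictMonoOn (fun r : ℝ => (1 - r) / ((1 + r) * (-2 * Real.log r))) (Set.Ioo 0 1) ∧
    Tendsto (fun r : ℝ => (1 - r) / ((1 + r) * (-2 * Real.log r))) (nhdsWithin 0 (Set.Ioi 0))
      (nhds 0) ∧
    Tendsto (fun r : ℝ => (1 - r) / ((1 + r) * (-2 * Real.log r))) (nhdsWithin 1 (Set.Iio 1))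
      (nhds (1 / 4)) :=
  ⟨strictMonoOn_one_sub_div_one_add_mul_neg_two_mul_log,
    tendsto_one_sub_div_one_add_mul_neg_two_mul_log_nhdsGT_zero,
    tendsto_one_sub_div_one_add_mul_neg_two_mul_log_nhdsLT_one⟩
end

section
/- A probability measure μ on the unit circle satisfies μ(B) = μ(conj(B)) for all Borel sets B if and only if all moments ∫_𝕋 ξⁿ dμ(ξ) (n ∈ ℕ) are real. -/
/-!
Conjugation invariance means `μ.map conj = μ`, and the moments of `μ.map conj` are the conjugates
of those of `μ`; so the moments are real iff the two measures have the same moments. On the circle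
`conj z = z⁻¹`, so the moments determine all mixed moments `∫ z ^ m * conj z ^ k`, i.e. the
integrals over the star algebra generated by the coordinate, which separates points and hence
determines a finite measure.
-/

open MeasureTheory BoundedContinuousFunction ComplexConjugate

namespace MeasureTheory

/-- The star subalgebra generated by `f` separates points and is spanned by the
`f ^ m * star f ^ k`. -/
theorem ext_of_integral_pow_mul_conj_pow_eq {X : Type*} [TopologicalSpace X]
    [PolishSpace X] [MeasurableSpace X] [BorelSpace X] {P P' : Measure X}
    [IsFiniteMeasure P] [IsFiniteMeasure P'] (f : X →ᵇ ℂ) (hf : Function.Injective f)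
    (h : ∀ m k : ℕ, ∫ x, f x ^ m * conj (f x) ^ k ∂P = ∫ x, f x ^ m * conj (f x) ^ k ∂P') :
    P = P' := by
  refine ext_of_forall_mem_subalgebra_integral_eq_of_polish (A := StarAlgebra.adjoin ℂ {f})
    (fun x y hxy => ⟨f, ⟨toContinuousMapStarₐ ℂ f, StarSubalgebra.mem_map.2
      ⟨f, StarAlgebra.self_mem_adjoin_singleton ℂ f, rfl⟩, rfl⟩, hf.ne hxy⟩) fun g hg => ?_
  have hspan : g ∈ Submodule.span ℂ (Submonoid.closure {f, star f} : Set (X →ᵇ ℂ)) := by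
    rw [← Set.singleton_union, ← Set.star_singleton, ← StarAlgebra.adjoin_eq_span]
    exact hg
  clear hg
  induction hspan using Submodule.span_induction with
  | mem g hg =>
    obtain ⟨m, k, rfl⟩ := (Submonoid.mem_closure_pair _ _ _).1 hg
    simpa using h m k
  | zero => simp
  | add g g' _ _ hg hg' =>
    simp only [coe_add, Pi.add_apply]
    rw [integral_add (g.integrable P) (g'.integrable P), integral_add (g.integrable P')
      (g'.integrable P'), hg, hg']
  | smul c g _ hg => simp only [coe_smul, integral_smul, hg]

theorem integral_pow_mul_conj_pow_of_ae_norm_eq_one {μ : Measure ℂ}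
    (hμ : ∀ᵐ z ∂μ, ‖z‖ = 1) {m k : ℕ} (hkm : k ≤ m) :
    ∫ z, z ^ m * conj z ^ k ∂μ = ∫ z, z ^ (m - k) ∂μ := by
  refine integral_congr_ae (hμ.mono fun z hz => ?_)
  have hz : z * conj z = 1 := by simp [Complex.mul_conj, Complex.normSq_eq_norm_sq, hz]
  beta_reduce
  rw [← Nat.sub_add_cancel hkm, pow_add, mul_assoc, ← mul_pow, hz, one_pow, mul_one,
    Nat.add_sub_cancel]

theorem integral_pow_mul_conj_pow_eq_ite_of_ae_norm_eq_one {μ : Measure ℂ}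
    (hμ : ∀ᵐ z ∂μ, ‖z‖ = 1) (m k : ℕ) :
    ∫ z, z ^ m * conj z ^ k ∂μ =
      if k ≤ m then ∫ z, z ^ (m - k) ∂μ else conj (∫ z, z ^ (k - m) ∂μ) := by
  split_ifs with hkm
  · exact integral_pow_mul_conj_pow_of_ae_norm_eq_one hμ hkm
  · rw [← integral_pow_mul_conj_pow_of_ae_norm_eq_one hμ (le_of_not_ge hkm), ← integral_conj]
    simp [mul_comm]

theorem ext_of_integral_pow_eq_of_ae_norm_eq_one {μ ν : Measure ℂ}
    [IsFiniteMeasure μ] [IsFiniteMeasure ν] (hμ : ∀ᵐ z ∂μ, ‖z‖ = 1) (hν : ∀ᵐ z ∂ν, ‖z‖ = 1)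
    (h : ∀ n : ℕ, ∫ z, z ^ n ∂μ = ∫ z, z ^ n ∂ν) : μ = ν := by
  set S := Metric.sphere (0 : ℂ) 1
  have hS : MeasurableSet S := Metric.isClosed_sphere.measurableSet
  have hμS : ∀ᵐ z ∂μ, z ∈ S := by simpa [S] using hμ
  have hνS : ∀ᵐ z ∂ν, z ∈ S := by simpa [S] using hν
  have hcomap : μ.comap ((↑) : S → ℂ) = ν.comap (↑) := by
    refine ext_of_integral_pow_mul_conj_pow_eq (mkOfCompact ⟨_, continuous_subtype_val⟩)
      Subtype.val_injective fun m k => ?_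
    simp only [mkOfCompact_apply, ContinuousMap.coe_mk]
    rw [integral_subtype_comap hS (f := fun z => z ^ m * conj z ^ k),
      integral_subtype_comap hS (f := fun z => z ^ m * conj z ^ k),
      Measure.restrict_eq_self_of_ae_mem hμS, Measure.restrict_eq_self_of_ae_mem hνS,
      integral_pow_mul_conj_pow_eq_ite_of_ae_norm_eq_one hμ,
      integral_pow_mul_conj_pow_eq_ite_of_ae_norm_eq_one hν, h, h]
  calc μ = (μ.comap ((↑) : S → ℂ)).map (↑) := by
        rw [map_comap_subtype_coe hS, Measure.restrict_eq_self_of_ae_mem hμS]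
    _ = ν := by
        rw [hcomap, map_comap_subtype_coe hS, Measure.restrict_eq_self_of_ae_mem hνS]

theorem integral_pow_map_conj (μ : Measure ℂ) (n : ℕ) :
    ∫ z, z ^ n ∂(μ.map conj) = conj (∫ z, z ^ n ∂μ) := by
  rw [integral_map Complex.continuous_conj.aemeasurable
    (continuous_pow n).aestronglyMeasurable, ← integral_conj]
  simp only [map_pow]

theorem map_conj_eq_self_iff (μ : Measure ℂ) :
    μ.map conj = μ ↔ ∀ B : Set ℂ, MeasurableSet B → μ B = μ (conj '' B) := by
  rw [Set.image_eq_preimage_of_inverse Complex.conj_conj Complex.conj_conj, Measure.ext_iff]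
  refine forall₂_congr fun B hB => ?_
  rw [Measure.map_apply Complex.continuous_conj.measurable hB, eq_comm]

theorem ae_map_conj_norm_eq_one {μ : Measure ℂ} (hμ : ∀ᵐ z ∂μ, ‖z‖ = 1) :
    ∀ᵐ z ∂(μ.map conj), ‖z‖ = 1 := by
  rw [ae_map_iff Complex.continuous_conj.aemeasurable
    (measurableSet_eq_fun continuous_norm.measurable measurable_const)]
  simpa using hμ

end MeasureTheory

theorem stmt_7 (μ : Measure ℂ) [IsProbabilityMeasure μ]
    (hcirc : μ {z : ℂ | ‖z‖ = 1}ᶜ = 0) :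
    (∀ B : Set ℂ, MeasurableSet B → μ B = μ ((starRingEnd ℂ) '' B)) ↔
      ∀ n : ℕ, (∫ z : ℂ, z ^ n ∂μ).im = 0 := by
  have hμ : ∀ᵐ z ∂μ, ‖z‖ = 1 := ae_iff.2 hcirc
  rw [← map_conj_eq_self_iff]
  constructor
  · intro hmap n
    rw [← Complex.conj_eq_iff_im, ← integral_pow_map_conj, hmap]
  · intro him
    refine ext_of_integral_pow_eq_of_ae_norm_eq_one (ae_map_conj_norm_eq_one hμ) hμ fun n => ?_
    rw [integral_pow_map_conj, Complex.conj_eq_iff_im.2 (him n)]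
end

section
/- Let f, g : ℝ → [0,∞) be continuous, even, 2π-periodic probability density functions (∫_{−π}^{π} f = ∫_{−π}^{π} g = 1) that are non-increasing on (0, π). Then the periodic convolution h(φ) = ∫_{−π}^{π} f(θ) g(φ−θ) dθ is even, 2π-periodic, and non-increasing on (0, π). -/
/-!
Write `φ₁ < φ₂` in `(0, L)` as `m - d < m + d`. Substituting `θ = m ± u` and folding `[-L, L]`
onto `[0, L]` gives
`h (m - d) - h (m + d) = ∫ u in 0..L, (f (m - u) - f (m + u)) * (g (u - d) - g (u + d))`,
and both factors are nonnegative: an even, `2L`-periodic function `k` that decreases on `[0, L]`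
satisfies `k (a + b) ≤ k (a - b)` for `a, b ∈ [0, L]`.
-/

open Real Set Filter Topology Function

theorem AntitoneOn.closure_of_continuous {α β : Type*} [TopologicalSpace α] [LinearOrder α]
    [OrderClosedTopology α] [TopologicalSpace β] [Preorder β] [OrderClosedTopology β]
    {g : α → β} {s : Set α} (hgc : Continuous g) (hgm : AntitoneOn g s) :
    AntitoneOn g (closure s) := by
  intro x hx y hy hxy
  rcases hxy.eq_or_lt with rfl | hlt
  · exact le_rfl
  have := mem_closure_iff_nhdsWithin_neBot.1 hx
  have := mem_closure_iff_nhdsWithin_neBot.1 hy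
  have hfst : Tendsto Prod.fst (𝓝[s] x ×ˢ 𝓝[s] y) (𝓝 x) :=
    tendsto_fst.mono_right nhdsWithin_le_nhds
  have hsnd : Tendsto Prod.snd (𝓝[s] x ×ˢ 𝓝[s] y) (𝓝 y) :=
    tendsto_snd.mono_right nhdsWithin_le_nhds
  have hevent : ∀ᶠ p in 𝓝[s] x ×ˢ 𝓝[s] y, g p.2 ≤ g p.1 := by
    filter_upwards [hfst.eventually_lt hsnd hlt,
      prod_mem_prod self_mem_nhdsWithin self_mem_nhdsWithin] with p hp hps
    exact hgm hps.1 hps.2 hp.le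
  exact le_of_tendsto_of_tendsto ((hgc.tendsto y).comp hsnd) ((hgc.tendsto x).comp hfst) hevent

theorem apply_add_le_apply_sub_of_even_of_periodic {β : Type*} [Preorder β] {g : ℝ → β} {L : ℝ}
    (hge : ∀ x, g (-x) = g x) (hgp : Periodic g (2 * L)) (hgm : AntitoneOn g (Icc 0 L))
    {a b : ℝ} (ha : a ∈ Icc 0 L) (hb : b ∈ Icc 0 L) : g (a + b) ≤ g (a - b) := by
  obtain ⟨ha0, haL⟩ := ha
  obtain ⟨hb0, hbL⟩ := hb
  have habs : g (a - b) = g |a - b| := by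
    rcases abs_choice (a - b) with h | h <;> rw [h]
    exact (hge _).symm
  have hmem : |a - b| ∈ Icc 0 L := ⟨abs_nonneg _, abs_le.2 ⟨by linarith, by linarith⟩⟩
  rw [habs]
  rcases le_or_gt (a + b) L with h | h
  · exact hgm hmem ⟨by linarith, h⟩ (abs_le.2 ⟨by linarith, by linarith⟩)
  · have hreflect : g (a + b) = g (2 * L - (a + b)) := by
      rw [show 2 * L - (a + b) = -(a + b) + 2 * L by ring, hgp, hge]
    rw [hreflect]
    exact hgm hmem ⟨by linarith, by linarith⟩ (abs_le.2 ⟨by linarith, by linarith⟩)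

theorem intervalIntegral.integral_neg_self_eq_integral_comp_neg_add {K : ℝ → ℝ}
    (hK : Continuous K) (a : ℝ) : ∫ u in (-a)..a, K u = ∫ u in 0..a, (K (-u) + K u) := by
  rw [← integral_add_adjacent_intervals (hK.intervalIntegrable (-a) 0) (hK.intervalIntegrable 0 a),
    integral_add ((by fun_prop : Continuous fun u => K (-u)).intervalIntegrable 0 a)
      (hK.intervalIntegrable 0 a),
    integral_comp_neg, neg_zero]

theorem Function.Periodic.intervalIntegral_eq_integral_fold {F : ℝ → ℝ} {L : ℝ}
    (hF : Periodic F (2 * L)) (hFc : Continuous F) (m : ℝ) :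
    ∫ θ in (-L)..L, F θ = ∫ u in 0..L, (F (m - u) + F (m + u)) := by
  have hshift : ∫ θ in (-L)..L, F θ = ∫ u in (-L)..L, F (m + u) := by
    have h := hF.intervalIntegral_add_eq (-L) (m + -L)
    rw [show -L + 2 * L = L by ring, show m + -L + 2 * L = m + L by ring] at h
    rw [h, intervalIntegral.integral_comp_add_left]
  rw [hshift, intervalIntegral.integral_neg_self_eq_integral_comp_neg_add (by fun_prop)]
  simp only [← sub_eq_add_neg]

noncomputable def periodicConv (L : ℝ) (f g : ℝ → ℝ) (φ : ℝ) : ℝ :=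
  ∫ θ in (-L)..L, f θ * g (φ - θ)

section periodicConv

variable {L : ℝ} {f g : ℝ → ℝ}

theorem periodicConv_neg (hfe : ∀ x, f (-x) = f x) (hge : ∀ x, g (-x) = g x) (φ : ℝ) :
    periodicConv L f g (-φ) = periodicConv L f g φ := by
  have h := intervalIntegral.integral_comp_neg (fun θ => f θ * g (-φ - θ)) (a := -L) (b := L)
  rw [neg_neg] at h
  rw [periodicConv, periodicConv, ← h]
  refine intervalIntegral.integral_congr fun θ _ => ?_
  simp only [hfe, show -φ - -θ = -(φ - θ) by ring, hge]

theorem periodicConv_periodic {T : ℝ} (hgp : Periodic g T) : Periodic (periodicConv L f g) T :=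
  fun φ => intervalIntegral.integral_congr fun θ _ => by
    rw [show φ + T - θ = φ - θ + T by ring, hgp]

theorem periodicConv_eq_integral_fold (hfc : Continuous f) (hgc : Continuous g)
    (hfp : Periodic f (2 * L)) (hgp : Periodic g (2 * L)) (φ m : ℝ) :
    periodicConv L f g φ =
      ∫ u in 0..L, (f (m - u) * g (φ - m + u) + f (m + u) * g (φ - m - u)) := by
  have hp : Periodic (fun θ => f θ * g (φ - θ)) (2 * L) := fun θ => by
    simp only [hfp θ, show φ - (θ + 2 * L) = φ - θ - 2 * L by ring, hgp.sub_eq]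
  rw [periodicConv, hp.intervalIntegral_eq_integral_fold (by fun_prop) m]
  refine intervalIntegral.integral_congr fun u _ => ?_
  simp only [show φ - (m - u) = φ - m + u by ring, show φ - (m + u) = φ - m - u by ring]

theorem periodicConv_sub_periodicConv (hfc : Continuous f) (hgc : Continuous g)
    (hge : ∀ x, g (-x) = g x) (hfp : Periodic f (2 * L)) (hgp : Periodic g (2 * L)) (m d : ℝ) :
    periodicConv L f g (m - d) - periodicConv L f g (m + d) =
      ∫ u in 0..L, (f (m - u) - f (m + u)) * (g (u - d) - g (u + d)) := by
  rw [periodicConv_eq_integral_fold hfc hgc hfp hgp _ m,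
    periodicConv_eq_integral_fold hfc hgc hfp hgp _ m,
    ← intervalIntegral.integral_sub (by apply Continuous.intervalIntegrable; fun_prop)
      (by apply Continuous.intervalIntegrable; fun_prop)]
  refine intervalIntegral.integral_congr fun u _ => ?_
  simp only [show m - d - m + u = u - d by ring, show m - d - m - u = -(u + d) by ring,
    show m + d - m + u = u + d by ring, show m + d - m - u = -(u - d) by ring, hge]
  ring

theorem periodicConv_antitoneOn (hL : 0 ≤ L) (hfc : Continuous f) (hgc : Continuous g)
    (hfe : ∀ x, f (-x) = f x) (hge : ∀ x, g (-x) = g x)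
    (hfp : Periodic f (2 * L)) (hgp : Periodic g (2 * L))
    (hfm : AntitoneOn f (Icc 0 L)) (hgm : AntitoneOn g (Icc 0 L)) :
    AntitoneOn (periodicConv L f g) (Icc 0 L) := by
  rintro x ⟨hx0, hxL⟩ y ⟨hy0, hyL⟩ hxy
  obtain ⟨m, d, rfl, rfl, hm, hd⟩ :
      ∃ m d, x = m - d ∧ y = m + d ∧ m ∈ Icc 0 L ∧ d ∈ Icc 0 L :=
    ⟨(x + y) / 2, (y - x) / 2, by ring, by ring, ⟨by linarith, by linarith⟩,
      ⟨by linarith, by linarith⟩⟩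
  rw [← sub_nonneg, periodicConv_sub_periodicConv hfc hgc hge hfp hgp]
  refine intervalIntegral.integral_nonneg hL fun u hu =>
    mul_nonneg (sub_nonneg.2 ?_) (sub_nonneg.2 ?_)
  · exact apply_add_le_apply_sub_of_even_of_periodic hfe hfp hfm hm hu
  · exact apply_add_le_apply_sub_of_even_of_periodic hge hgp hgm hu hd

end periodicConv

theorem stmt_9_general (f g : ℝ → ℝ)
    (hfc : Continuous f) (hgc : Continuous g)
    (hfe : ∀ x, f (-x) = f x) (hge : ∀ x, g (-x) = g x)
    (hfp : Function.Periodic f (2 * π)) (hgp : Function.Periodic g (2 * π))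
    (hfm : AntitoneOn f (Set.Ioo 0 π)) (hgm : AntitoneOn g (Set.Ioo 0 π)) :
    (∀ φ, (∫ θ in (-π)..π, f θ * g (-φ - θ)) = ∫ θ in (-π)..π, f θ * g (φ - θ)) ∧
    Function.Periodic (fun φ => ∫ θ in (-π)..π, f θ * g (φ - θ)) (2 * π) ∧
    AntitoneOn (fun φ => ∫ θ in (-π)..π, f θ * g (φ - θ)) (Set.Ioo 0 π) := by
  have hfI : AntitoneOn f (Icc 0 π) := closure_Ioo pi_pos.ne ▸ hfm.closure_of_continuous hfc
  have hgI : AntitoneOn g (Icc 0 π) := closure_Ioo pi_pos.ne ▸ hgm.closure_of_continuous hgc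
  exact ⟨periodicConv_neg hfe hge, periodicConv_periodic hgp,
    (periodicConv_antitoneOn pi_pos.le hfc hgc hfe hge hfp hgp hfI hgI).mono Ioo_subset_Icc_self⟩

theorem stmt_9 (f g : ℝ → ℝ)
    (hfc : Continuous f) (hgc : Continuous g)
    (hf0 : ∀ x, 0 ≤ f x) (hg0 : ∀ x, 0 ≤ g x)
    (hfe : ∀ x, f (-x) = f x) (hge : ∀ x, g (-x) = g x)
    (hfp : Function.Periodic f (2 * π)) (hgp : Function.Periodic g (2 * π))
    (hf1 : (∫ θ in (-π)..π, f θ) = 1) (hg1 : (∫ θ in (-π)..π, g θ) = 1)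
    (hfm : AntitoneOn f (Set.Ioo 0 π)) (hgm : AntitoneOn g (Set.Ioo 0 π)) :
    (∀ φ, (∫ θ in (-π)..π, f θ * g (-φ - θ)) = ∫ θ in (-π)..π, f θ * g (φ - θ)) ∧
    Function.Periodic (fun φ => ∫ θ in (-π)..π, f θ * g (φ - θ)) (2 * π) ∧
    AntitoneOn (fun φ => ∫ θ in (-π)..π, f θ * g (φ - θ)) (Set.Ioo 0 π) :=
  stmt_9_general f g hfc hgc hfe hge hfp hgp hfm hgm
end

section
/- Fix ψ ∈ (0, π) and let g : ℝ → [0,∞) be continuous, even, 2π-periodic, and non-increasing on (0, π). Then the function k(φ) = ∫_{φ−ψ}^{φ+ψ} g(θ) dθ is non-increasing on (0, π). -/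
/-!
Moving the window from `x` to `y > x` gains `∫ θ in x+ψ..y+ψ, g` and loses `∫ θ in x-ψ..y-ψ, g`;
after the shift `θ ↦ θ + 2ψ` the comparison is pointwise, `g (θ + 2ψ) ≤ g θ`. Since `g` is even
and `2π`-periodic, it is a non-increasing function of the distance to `2πℤ`, and for
`θ + ψ ∈ (0, π)` the point `θ + 2ψ` is at least as far from `2πℤ` as `θ`.
-/

open Real Set

theorem AntitoneOn.Icc_of_Ioo {α β : Type*} [LinearOrder α] [TopologicalSpace α] [OrderTopology α]
    [DenselyOrdered α] [LinearOrder β] [TopologicalSpace β] [OrderClosedTopology β]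
    {f : α → β} {a b : α} (hab : a < b) (hf : AntitoneOn f (Ioo a b))
    (hc : ContinuousOn f (Icc a b)) : AntitoneOn f (Icc a b) := by
  have hc' : ContinuousOn (OrderDual.toDual ∘ f) (Icc a b) := hc
  have hIco : MonotoneOn (OrderDual.toDual ∘ f) (Ico a b) := by
    rw [← Ioo_insert_left hab]
    exact hf.dual_right.insert_of_continuousWithinAt (left_nhdsWithin_Ioo_neBot hab)
      ((hc' a (left_mem_Icc.2 hab.le)).mono Ioo_subset_Icc_self)
  rw [← Ico_insert_right hab.le]
  exact hIco.insert_of_continuousWithinAt (right_nhdsWithin_Ico_neBot hab)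
    ((hc' b (right_mem_Icc.2 hab.le)).mono Ico_subset_Icc_self)

theorem apply_le_apply_of_abs_le_of_le_sub_abs {g : ℝ → ℝ} {p : ℝ} (hge : ∀ x, g (-x) = g x)
    (hgp : Function.Periodic g (2 * p)) (hgm : AntitoneOn g (Icc 0 p)) {x y : ℝ}
    (hx : |x| ≤ p) (hxy : |x| ≤ y) (hy : y ≤ 2 * p - |x|) : g y ≤ g x := by
  have habs : g |x| = g x := by
    rcases abs_cases x with ⟨h, -⟩ | ⟨h, -⟩ <;> simp only [h, hge]
  have hx0 : |x| ∈ Icc 0 p := ⟨abs_nonneg x, hx⟩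
  rw [← habs]
  rcases le_total y p with hyp | hpy
  · exact hgm hx0 ⟨hxy.trans' (abs_nonneg x), hyp⟩ hxy
  · have hreflect : g (2 * p - y) = g y := by
      rw [← hge, neg_sub, hgp.sub_eq]
    rw [← hreflect]
    exact hgm hx0 ⟨by linarith [abs_nonneg x], by linarith⟩ (by linarith)

theorem integral_window_shift_le {g : ℝ → ℝ} (hg : Continuous g) {a b L : ℝ} (hab : a ≤ b)
    (h : ∀ θ ∈ Icc a b, g (θ + L) ≤ g θ) :
    ∫ θ in b..b + L, g θ ≤ ∫ θ in a..a + L, g θ := by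
  have hdiff : (∫ θ in b..b + L, g θ) - ∫ θ in a..a + L, g θ =
      (∫ θ in a..b, g (θ + L)) - ∫ θ in a..b, g θ := by
    rw [intervalIntegral.integral_interval_sub_interval_comm' (hg.intervalIntegrable _ _)
      (hg.intervalIntegrable _ _) (hg.intervalIntegrable _ _),
      intervalIntegral.integral_comp_add_right]
  have hmono : ∫ θ in a..b, g (θ + L) ≤ ∫ θ in a..b, g θ :=
    intervalIntegral.integral_mono_on hab
      ((hg.comp (continuous_add_const L)).intervalIntegrable _ _) (hg.intervalIntegrable _ _) h
  linarith

theorem stmt_10_general (ψ : ℝ) (hψ : ψ ∈ Set.Ioo 0 π) (g : ℝ → ℝ)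
    (hgc : Continuous g)
    (hge : ∀ x, g (-x) = g x) (hgp : Function.Periodic g (2 * π))
    (hgm : AntitoneOn g (Set.Ioo 0 π)) :
    AntitoneOn (fun φ => ∫ θ in (φ - ψ)..(φ + ψ), g θ) (Set.Ioo 0 π) := by
  intro x hx y hy hxy
  obtain ⟨hψ0, hψπ⟩ := hψ
  have hgm' := hgm.Icc_of_Ioo pi_pos hgc.continuousOn
  have hpointwise : ∀ θ ∈ Icc (x - ψ) (y - ψ), g (θ + 2 * ψ) ≤ g θ := fun θ ⟨hθx, hθy⟩ ↦ by
    have hθ_lo : -θ ≤ ψ := by linarith [hx.1]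
    have hθ_hi : θ + ψ ≤ π := by linarith [hy.2]
    apply apply_le_apply_of_abs_le_of_le_sub_abs hge hgp hgm' <;>
      rcases abs_cases θ with ⟨h, -⟩ | ⟨h, -⟩ <;> rw [h] <;> linarith
  have hshift : ∀ t, t - ψ + 2 * ψ = t + ψ := fun t ↦ by ring
  simpa only [hshift] using integral_window_shift_le hgc (by linarith) hpointwise

theorem stmt_10 (ψ : ℝ) (hψ : ψ ∈ Set.Ioo 0 π) (g : ℝ → ℝ)
    (hgc : Continuous g) (hg0 : ∀ x, 0 ≤ g x)
    (hge : ∀ x, g (-x) = g x) (hgp : Function.Periodic g (2 * π))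
    (hgm : AntitoneOn g (Set.Ioo 0 π)) :
    AntitoneOn (fun φ => ∫ θ in (φ - ψ)..(φ + ψ), g θ) (Set.Ioo 0 π) :=
  stmt_10_general ψ hψ g hgc hge hgp hgm
end

section
/- Let r ∈ (0,1) and f_r(θ) = ((1−r²)/(2π))·(1/(1 − 2r cos θ + r²) + 1/(1 + 2r cos θ + r²)). Then f_r attains a strict global maximum at θ = 0 and θ = π, and a strict local minimum at θ = π/2 and θ = −π/2 on [−π, π); in particular there exists a > 0 such that the equation f_r(θ) = a has at least three solutions θ ∈ [−π, π). -/
/-!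
Writing `c = cos θ`, the two Poisson terms combine into
`f_r(θ) = (1 - r⁴) / (π ((1 + r²)² - 4 r² c²))`, a strictly increasing function of `c²`.
Hence `f_r` is largest exactly where `cos² θ = 1` (at `0` and `-π`), smallest exactly where
`cos θ = 0` (at `±π/2`), and takes the same value at `π/3`, `-π/3` and `2π/3`, where `cos² θ = 1/4`.
-/

open Real

/-- `f_r(θ) = poissonKernelSymm r (cos θ)`. -/
noncomputable def poissonKernelSymm (r c : ℝ) : ℝ :=
  (1 - r ^ 2) / (2 * π) * (1 / (1 - 2 * r * c + r ^ 2) + 1 / (1 + 2 * r * c + r ^ 2))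

theorem poissonKernelSymm_neg (r c : ℝ) : poissonKernelSymm r (-c) = poissonKernelSymm r c := by
  unfold poissonKernelSymm
  ring_nf

theorem poissonKernelSymm_denom_pos {r c : ℝ} (hr : r ^ 2 < 1) (hc : c ^ 2 ≤ 1) :
    0 < (1 + r ^ 2) ^ 2 - 4 * r ^ 2 * c ^ 2 := by
  nlinarith [sq_nonneg r]

theorem poissonKernelSymm_eq {r c : ℝ} (h : (1 + r ^ 2) ^ 2 - 4 * r ^ 2 * c ^ 2 ≠ 0) :
    poissonKernelSymm r c = (1 - r ^ 4) / (π * ((1 + r ^ 2) ^ 2 - 4 * r ^ 2 * c ^ 2)) := by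
  have hfactor : (1 + r ^ 2) ^ 2 - 4 * r ^ 2 * c ^ 2
      = (1 - 2 * r * c + r ^ 2) * (1 + 2 * r * c + r ^ 2) := by ring
  rw [hfactor] at h ⊢
  have hA : 1 - 2 * r * c + r ^ 2 ≠ 0 := left_ne_zero_of_mul h
  have hB : 1 + 2 * r * c + r ^ 2 ≠ 0 := right_ne_zero_of_mul h
  unfold poissonKernelSymm
  rw [one_div_add_one_div hA hB]
  field_simp
  ring

theorem poissonKernelSymm_pos {r c : ℝ} (hr : r ^ 2 < 1) (hc : c ^ 2 ≤ 1) :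
    0 < poissonKernelSymm r c := by
  have hD := poissonKernelSymm_denom_pos hr hc
  rw [poissonKernelSymm_eq hD.ne']
  have : 0 < 1 - r ^ 4 := by nlinarith [sq_nonneg r]
  positivity

theorem poissonKernelSymm_lt_of_sq_lt {r a b : ℝ} (hr0 : r ≠ 0) (hr1 : r ^ 2 < 1)
    (hab : a ^ 2 < b ^ 2) (hb : b ^ 2 ≤ 1) :
    poissonKernelSymm r a < poissonKernelSymm r b := by
  have hDa := poissonKernelSymm_denom_pos hr1 (hab.le.trans hb)
  have hDb := poissonKernelSymm_denom_pos hr1 hb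
  rw [poissonKernelSymm_eq hDa.ne', poissonKernelSymm_eq hDb.ne']
  have hnum : 0 < 1 - r ^ 4 := by nlinarith [sq_nonneg r]
  have hr2 : 0 < r ^ 2 := by positivity
  apply div_lt_div_of_pos_left hnum (by positivity)
  gcongr

theorem sin_ne_zero_of_abs_lt_pi {x : ℝ} (hx : |x| < π) (h0 : x ≠ 0) : sin x ≠ 0 := by
  rw [abs_lt] at hx
  exact fun h => h0 ((sin_eq_zero_iff_of_lt_of_lt hx.1 hx.2).1 h)

theorem cos_sq_lt_one_of_mem_Ioo {θ : ℝ} (hθ : θ ∈ Set.Ioo (-π) π) (h0 : θ ≠ 0) :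
    cos θ ^ 2 < 1 := by
  have hsin := sin_ne_zero_of_abs_lt_pi (abs_lt.2 hθ) h0
  nlinarith [cos_sq_add_sin_sq θ, sq_pos_of_ne_zero hsin]

theorem stmt_12 (r : ℝ) (hr : r ∈ Set.Ioo (0 : ℝ) 1) :
    let f : ℝ → ℝ := fun θ => (1 - r ^ 2) / (2 * π) *
      (1 / (1 - 2 * r * Real.cos θ + r ^ 2) + 1 / (1 + 2 * r * Real.cos θ + r ^ 2))
    (∀ θ ∈ Set.Ico (-π) π, θ ≠ 0 → θ ≠ -π → f θ < f 0) ∧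
    f (-π) = f 0 ∧
    (∃ ε > 0, ∀ θ : ℝ, |θ - π / 2| < ε → θ ≠ π / 2 → f (π / 2) < f θ) ∧
    (∃ ε > 0, ∀ θ : ℝ, |θ - (-(π / 2))| < ε → θ ≠ -(π / 2) → f (-(π / 2)) < f θ) ∧
    (∃ a > (0 : ℝ), ∃ θ₁ θ₂ θ₃ : ℝ, θ₁ ∈ Set.Ico (-π) π ∧ θ₂ ∈ Set.Ico (-π) π ∧
      θ₃ ∈ Set.Ico (-π) π ∧ θ₁ ≠ θ₂ ∧ θ₁ ≠ θ₃ ∧ θ₂ ≠ θ₃ ∧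
      f θ₁ = a ∧ f θ₂ = a ∧ f θ₃ = a) := by
  obtain ⟨hr0, hr1⟩ := hr
  have hr2 : r ^ 2 < 1 := by nlinarith
  intro f
  have hlt : ∀ a b, cos a ^ 2 < cos b ^ 2 → f a < f b := fun a b h =>
    poissonKernelSymm_lt_of_sq_lt hr0.ne' hr2 h (cos_sq_le_one b)
  have hπ := pi_pos
  refine ⟨fun θ hθ h0 hπθ => hlt _ _ ?_, ?_, ⟨π, hπ, fun θ hθ hne => hlt _ _ ?_⟩,
    ⟨π, hπ, fun θ hθ hne => hlt _ _ ?_⟩, ⟨f (π / 3), ?_, π / 3, -(π / 3), π - π / 3, ?_⟩⟩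
  · rw [cos_zero, one_pow]
    exact cos_sq_lt_one_of_mem_Ioo ⟨lt_of_le_of_ne hθ.1 (Ne.symm hπθ), hθ.2⟩ h0
  · change poissonKernelSymm r (cos (-π)) = poissonKernelSymm r (cos 0)
    rw [cos_neg, cos_pi, cos_zero, poissonKernelSymm_neg]
  · rw [cos_pi_div_two, ← sin_pi_div_two_sub]
    have := sin_ne_zero_of_abs_lt_pi (x := π / 2 - θ) (by rwa [abs_sub_comm])
      (sub_ne_zero.2 (Ne.symm hne))
    simpa using sq_pos_of_ne_zero this
  · rw [cos_neg, cos_pi_div_two, ← sin_add_pi_div_two]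
    have := sin_ne_zero_of_abs_lt_pi (x := θ + π / 2) (by rwa [sub_neg_eq_add] at hθ)
      (by rwa [Ne, ← eq_neg_iff_add_eq_zero])
    simpa using sq_pos_of_ne_zero this
  · exact poissonKernelSymm_pos hr2 (cos_sq_le_one _)
  · refine ⟨⟨by linarith, by linarith⟩, ⟨by linarith, by linarith⟩, ⟨by linarith, by linarith⟩,
      by linarith, by linarith, by linarith, rfl, ?_, ?_⟩
    · show poissonKernelSymm r (cos (-(π / 3))) = poissonKernelSymm r (cos (π / 3))
      rw [cos_neg]
    · show poissonKernelSymm r (cos (π - π / 3)) = poissonKernelSymm r (cos (π / 3))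
      rw [cos_pi_sub, poissonKernelSymm_neg]
end

section
/- For all r ∈ (0,1), θ ∈ (0, π/2), x ∈ (0, φ) with φ ∈ (0, π/2) and r < (cos φ)/4, the quantity L_r(θ,x) = ((1+r²)² + 4r²(1 − sin(θ−x)·sin(θ+x)))·cos x − 4r(1+r²)·cos θ is positive; moreover L_r(θ,x) ≥ 4(1+r²)·((cos φ)/4 − r). -/
open Real

lemma sin_sub_mul_sin_add_le_one (a b : ℝ) : sin (a - b) * sin (a + b) ≤ 1 :=
  calc sin (a - b) * sin (a + b) ≤ |sin (a - b)| * |sin (a + b)| := by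
        rw [← abs_mul]; exact le_abs_self _
    _ ≤ 1 := mul_le_one₀ (abs_sin_le_one _) (abs_nonneg _) (abs_sin_le_one _)

lemma four_mul_one_add_sq_mul_sub_le {a c s t r : ℝ} (ha : 0 ≤ a) (hac : a ≤ c) (hs : s ≤ 1)
    (ht : t ≤ 1) (hr : 0 ≤ r) :
    4 * (1 + r ^ 2) * (a / 4 - r) ≤ ((1 + r ^ 2) ^ 2 + 4 * r ^ 2 * (1 - s)) * c
      - 4 * r * (1 + r ^ 2) * t := by
  have hmid : 0 ≤ 4 * r ^ 2 * (1 - s) * c :=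
    mul_nonneg (mul_nonneg (by positivity) (by linarith)) (ha.trans hac)
  have hfirst : (1 + r ^ 2) * a ≤ (1 + r ^ 2) ^ 2 * c :=
    calc (1 + r ^ 2) * a ≤ (1 + r ^ 2) * a + r ^ 2 * (1 + r ^ 2) * a := by
          have : 0 ≤ r ^ 2 * (1 + r ^ 2) * a := by positivity
          linarith
      _ = (1 + r ^ 2) ^ 2 * a := by ring
      _ ≤ (1 + r ^ 2) ^ 2 * c := by gcongr
  have hlast : 4 * r * (1 + r ^ 2) * t ≤ 4 * r * (1 + r ^ 2) :=
    mul_le_of_le_one_right (by positivity) ht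
  linear_combination hmid + hfirst + hlast

theorem stmt_13_general (φ r θ x : ℝ) (hφ : φ ∈ Set.Ioo 0 (π / 2))
    (hr : r ∈ Set.Ioo 0 (Real.cos φ / 4))
    (hx : x ∈ Set.Ioo 0 φ) :
    0 < ((1 + r ^ 2) ^ 2 + 4 * r ^ 2 * (1 - Real.sin (θ - x) * Real.sin (θ + x))) * Real.cos x
        - 4 * r * (1 + r ^ 2) * Real.cos θ ∧
    4 * (1 + r ^ 2) * (Real.cos φ / 4 - r) ≤
      ((1 + r ^ 2) ^ 2 + 4 * r ^ 2 * (1 - Real.sin (θ - x) * Real.sin (θ + x))) * Real.cos x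
        - 4 * r * (1 + r ^ 2) * Real.cos θ := by
  obtain ⟨hr0, hrφ⟩ := hr
  have hcos_φ : 0 ≤ cos φ := cos_nonneg_of_mem_Icc ⟨by linarith [pi_pos, hφ.1], hφ.2.le⟩
  have hcos_le : cos φ ≤ cos x :=
    cos_le_cos_of_nonneg_of_le_pi hx.1.le (by linarith [pi_pos, hφ.2]) hx.2.le
  have key := four_mul_one_add_sq_mul_sub_le hcos_φ hcos_le (sin_sub_mul_sin_add_le_one θ x)
    (cos_le_one θ) hr0.le
  have hpos : 0 < 4 * (1 + r ^ 2) * (cos φ / 4 - r) := by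
    have : 0 < cos φ / 4 - r := by linarith
    positivity
  exact ⟨hpos.trans_le key, key⟩

theorem stmt_13 (φ r θ x : ℝ) (hφ : φ ∈ Set.Ioo 0 (π / 2))
    (hr : r ∈ Set.Ioo 0 (Real.cos φ / 4)) (hθ : θ ∈ Set.Ioo 0 (π / 2))
    (hx : x ∈ Set.Ioo 0 φ) :
    0 < ((1 + r ^ 2) ^ 2 + 4 * r ^ 2 * (1 - Real.sin (θ - x) * Real.sin (θ + x))) * Real.cos x
        - 4 * r * (1 + r ^ 2) * Real.cos θ ∧
    4 * (1 + r ^ 2) * (Real.cos φ / 4 - r) ≤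
      ((1 + r ^ 2) ^ 2 + 4 * r ^ 2 * (1 - Real.sin (θ - x) * Real.sin (θ + x))) * Real.cos x
        - 4 * r * (1 + r ^ 2) * Real.cos θ :=
  stmt_13_general φ r θ x hφ hr hx
end

section
/- Let φ ∈ (0, π/2), r_φ = (cos φ)/4, and let μ be a symmetric probability measure on the unit circle supported in {e^{iθ} : θ ∈ [−φ, φ]}. For every r ∈ (0, r_φ), the density f_r(θ) = ((1−r²)/(2π)) ∫ 1/(1 − 2r cos(θ−x) + r²) dμ(x) of PK_{r,0} ⊛ μ is non-increasing on (0, π) and non-decreasing on (−π, 0); hence PK_{r,0} ⊛ μ is unimodal with mode 0. -/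
/-!
Since `μ` is symmetric, `f_r(θ)` is proportional to `∫ (P(θ - x) + P(θ + x)) dμ(x)`, where
`P = 1 / (1 - 2 r cos · + r²)`. For each `x` with `cos x > 4 r` the symmetrized integrand is a
non-decreasing function of `cos θ`: clearing denominators, the difference of its values at `θ`
and `θ'` factors as `2 (cos θ - cos θ')` times a bracket that is nonnegative exactly because
`4 r < cos x`. As `cos` decreases on `(0, π)` and increases on `(-π, 0)`, so does `f_r`.
-/

open Real MeasureTheory

/-- `PK_{r,0}` has density `θ ↦ (1 - r ^ 2) / (2 * π) * poissonFactor r θ`. -/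
noncomputable def poissonFactor (r t : ℝ) : ℝ := 1 / (1 - 2 * r * cos t + r ^ 2)

section PoissonFactor

variable {r : ℝ}

lemma sq_one_sub_le_poissonDenom (hr : 0 ≤ r) (t : ℝ) :
    (1 - r) ^ 2 ≤ 1 - 2 * r * cos t + r ^ 2 := by
  nlinarith [cos_le_one t]

lemma poissonDenom_pos (hr0 : 0 ≤ r) (hr1 : r < 1) (t : ℝ) : 0 < 1 - 2 * r * cos t + r ^ 2 :=
  (pow_pos (sub_pos.2 hr1) 2).trans_le (sq_one_sub_le_poissonDenom hr0 t)

lemma continuous_poissonFactor (hr0 : 0 ≤ r) (hr1 : r < 1) : Continuous (poissonFactor r) :=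
  continuous_const.div (by fun_prop) fun t => (poissonDenom_pos hr0 hr1 t).ne'

lemma norm_poissonFactor_le (hr0 : 0 ≤ r) (hr1 : r < 1) (t : ℝ) :
    ‖poissonFactor r t‖ ≤ 1 / (1 - r) ^ 2 := by
  rw [poissonFactor, Real.norm_of_nonneg (one_div_pos.2 (poissonDenom_pos hr0 hr1 t)).le]
  exact one_div_le_one_div_of_le (pow_pos (sub_pos.2 hr1) 2) (sq_one_sub_le_poissonDenom hr0 t)

lemma integrable_poissonFactor_comp {α : Type*} [MeasurableSpace α] {μ : Measure α}
    [IsFiniteMeasure μ] (hr0 : 0 ≤ r) (hr1 : r < 1) {h : α → ℝ} (hh : Measurable h) :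
    Integrable (fun x => poissonFactor r (h x)) μ :=
  .of_bound ((continuous_poissonFactor hr0 hr1).measurable.comp hh).aestronglyMeasurable _
    (.of_forall fun x => norm_poissonFactor_le hr0 hr1 (h x))

lemma poissonPair_bracket_nonneg {u c c' : ℝ} (v : ℝ) (hr : 0 < r) (hu : 4 * r < u)
    (hu1 : u ≤ 1) (hc : c ≤ 1) (hc' : c' ≤ 1) :
    0 ≤ 2 * r * u * ((1 + r ^ 2) ^ 2 + 4 * r ^ 2 * v ^ 2) + 8 * r ^ 3 * u * (c * c')
      - 4 * r ^ 2 * (1 + r ^ 2) * (c + c') := by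
  have h₁ : 0 ≤ 1 + r ^ 2 - 2 * r * u := by nlinarith [sq_nonneg (1 - r)]
  have h₂ : 0 ≤ (1 + r ^ 2) * u - 4 * r := by nlinarith [sq_nonneg r]
  have h₃ : 0 ≤ (1 - c) * (1 - c') := mul_nonneg (by linarith) (by linarith)
  have h₄ : 0 ≤ 2 - c - c' := by linarith
  have hu0 : 0 ≤ u := by linarith
  calc (0 : ℝ) ≤ 4 * r ^ 2 * (1 + r ^ 2 - 2 * r * u) * (2 - c - c')
        + 8 * r ^ 3 * u * ((1 - c) * (1 - c')) + 8 * r ^ 3 * u * v ^ 2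
        + 2 * r * (1 + r ^ 2) * ((1 + r ^ 2) * u - 4 * r) + 8 * r ^ 3 * u := by
        have := hr.le
        positivity
    _ = _ := by ring

lemma poissonFactor_pair_le {x θ θ' : ℝ} (hr : 0 < r) (hrx : 4 * r < cos x)
    (hθ : cos θ' ≤ cos θ) :
    poissonFactor r (θ' - x) + poissonFactor r (θ' + x)
      ≤ poissonFactor r (θ - x) + poissonFactor r (θ + x) := by
  have hD := poissonDenom_pos hr.le (by linarith [cos_le_one x])
  unfold poissonFactor
  rw [div_add_div _ _ (hD _).ne' (hD _).ne', div_add_div _ _ (hD _).ne' (hD _).ne',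
    div_le_div_iff₀ (mul_pos (hD _) (hD _)) (mul_pos (hD _) (hD _)), ← sub_nonneg]
  have hbr := poissonPair_bracket_nonneg (sin x) hr hrx (cos_le_one x) (cos_le_one θ)
    (cos_le_one θ')
  convert mul_nonneg (mul_nonneg zero_le_two (sub_nonneg.2 hθ)) hbr using 1
  simp only [cos_sub, cos_add]
  set u := cos x
  set v := sin x
  set c := cos θ
  set c' := cos θ'
  linear_combination (8 * r ^ 2 * v ^ 2 * (1 + r ^ 2 - 2 * r * u * c')) * cos_sq_add_sin_sq θ
    - (8 * r ^ 2 * v ^ 2 * (1 + r ^ 2 - 2 * r * u * c)) * cos_sq_add_sin_sq θ'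
    + (8 * r ^ 2 * ((1 + r ^ 2 - 2 * r * u * c) * c' ^ 2 - (1 + r ^ 2 - 2 * r * u * c') * c ^ 2))
      * cos_sq_add_sin_sq x

variable {μ : Measure ℝ} [IsFiniteMeasure μ]

lemma integrable_poissonFactor_pair (hr0 : 0 ≤ r) (hr1 : r < 1) (θ : ℝ) :
    Integrable (fun x => poissonFactor r (θ - x) + poissonFactor r (θ + x)) μ :=
  (integrable_poissonFactor_comp hr0 hr1 (h := (θ - ·)) (by fun_prop)).add
    (integrable_poissonFactor_comp hr0 hr1 (h := (θ + ·)) (by fun_prop))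

lemma two_mul_integral_poissonFactor [μ.IsNegInvariant] (hr0 : 0 ≤ r) (hr1 : r < 1) (θ : ℝ) :
    2 * ∫ x, poissonFactor r (θ - x) ∂μ
      = ∫ x, (poissonFactor r (θ - x) + poissonFactor r (θ + x)) ∂μ := by
  rw [integral_add (integrable_poissonFactor_comp hr0 hr1 (h := (θ - ·)) (by fun_prop))
    (integrable_poissonFactor_comp hr0 hr1 (h := (θ + ·)) (by fun_prop)),
    ← integral_neg_eq_self (fun x => poissonFactor r (θ + x)) μ]
  simp only [← sub_eq_add_neg]
  ring

lemma integral_poissonFactor_le_of_cos_le [μ.IsNegInvariant] {θ θ' : ℝ} (hr0 : 0 < r)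
    (hr1 : r < 1) (hμ : ∀ᵐ x ∂μ, 4 * r < cos x) (hθ : cos θ' ≤ cos θ) :
    ∫ x, poissonFactor r (θ' - x) ∂μ ≤ ∫ x, poissonFactor r (θ - x) ∂μ := by
  suffices 2 * ∫ x, poissonFactor r (θ' - x) ∂μ ≤ 2 * ∫ x, poissonFactor r (θ - x) ∂μ by
    linarith
  rw [two_mul_integral_poissonFactor hr0.le hr1, two_mul_integral_poissonFactor hr0.le hr1]
  refine integral_mono_ae ?_ ?_ (hμ.mono fun x hx => poissonFactor_pair_le hr0 hx hθ)
  all_goals exact integrable_poissonFactor_pair hr0.le hr1 _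

end PoissonFactor

lemma MeasureTheory.Measure.isNegInvariant_of_preimage_neg {G : Type*} [MeasurableSpace G] [Neg G]
    [MeasurableNeg G] {μ : Measure G}
    (hsym : ∀ B : Set G, MeasurableSet B → μ B = μ ((fun x => -x) ⁻¹' B)) :
    μ.IsNegInvariant := by
  refine ⟨Measure.ext fun B hB => ?_⟩
  rw [Measure.neg, Measure.map_apply measurable_neg hB]
  exact (hsym B hB).symm

lemma cos_le_cos_of_mem_Icc {φ x : ℝ} (hφ : φ ≤ π) (hx : x ∈ Set.Icc (-φ) φ) :
    cos φ ≤ cos x := by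
  rw [← cos_abs x]
  exact cos_le_cos_of_nonneg_of_le_pi (abs_nonneg x) hφ (abs_le.2 hx)

theorem stmt_14 (φ : ℝ) (hφ : φ ∈ Set.Ioo 0 (π / 2))
    (μ : Measure ℝ) [IsProbabilityMeasure μ]
    (hsupp : μ (Set.Icc (-φ) φ)ᶜ = 0)
    (hsym : ∀ B : Set ℝ, MeasurableSet B → μ B = μ ((fun x => -x) ⁻¹' B))
    (r : ℝ) (hr : r ∈ Set.Ioo 0 (Real.cos φ / 4)) :
    AntitoneOn (fun θ : ℝ =>
        (1 - r ^ 2) / (2 * π) * ∫ x, 1 / (1 - 2 * r * Real.cos (θ - x) + r ^ 2) ∂μ)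
      (Set.Ioo 0 π) ∧
    MonotoneOn (fun θ : ℝ =>
        (1 - r ^ 2) / (2 * π) * ∫ x, 1 / (1 - 2 * r * Real.cos (θ - x) + r ^ 2) ∂μ)
      (Set.Ioo (-π) 0) := by
  obtain ⟨hr0, hrφ⟩ := hr
  have := Measure.isNegInvariant_of_preimage_neg hsym
  have hr1 : r < 1 := by linarith [cos_le_one φ]
  have hμ : ∀ᵐ x ∂μ, 4 * r < cos x := (ae_iff.2 hsupp).mono fun x hx =>
    by linarith [cos_le_cos_of_mem_Icc (by linarith [hφ.2, pi_pos]) hx]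
  have hmono {θ θ' : ℝ} (hθ : cos θ' ≤ cos θ) := mul_le_mul_of_nonneg_left
    (integral_poissonFactor_le_of_cos_le hr0 hr1 hμ hθ)
    (div_nonneg (by nlinarith) (by positivity) : 0 ≤ (1 - r ^ 2) / (2 * π))
  refine ⟨fun a ha b hb hab => hmono ?_, fun a ha b hb hab => hmono ?_⟩
  · exact antitoneOn_cos ⟨ha.1.le, ha.2.le⟩ ⟨hb.1.le, hb.2.le⟩ hab
  · rw [← cos_neg a, ← cos_neg b]
    exact antitoneOn_cos ⟨by linarith [hb.2], by linarith [hb.1]⟩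
      ⟨by linarith [ha.2], by linarith [ha.1]⟩ (neg_le_neg hab)
end

section
/- Let g₁(θ) = 4·(−a·sin θ·(1 + cos θ) + 2b·cos θ·(1 − cos θ)) with a, b > 0 satisfying a²/(4b²) < 1/27. Then g₁(0) = 0, g₁′(0) = −8a < 0, g₁ < 0 on [π/2, π), and there exist α, β with 0 < α < π/3 < β < π/2 such that g₁ > 0 on (α, β) and g₁ < 0 on (0, α) ∪ (β, π). -/
/-!
On `(0, π/2)`, multiplying `g₁` by the positive conjugate
`2b cos θ (1 - cos θ) + a sin θ (1 + cos θ)` and using `sin² θ = 1 - cos² θ` shows that `g₁ θ`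
has the sign of `threshold (cos θ) - a²/(4b²)`. The derivative of `threshold` is
`2c (1 - 2c) / (1 + c)⁴`, so it rises from `0` to its maximum `1/27` at `c = 1/2` and falls back
to `0` at `c = 1`: a level in `(0, 1/27)` is crossed exactly once on each side of `1/2`, and `α`,
`β` are the arccosines of the two crossings. On `[π/2, π)` both terms of `g₁` are nonpositive and
the sine term is negative.
-/

open Real Set

noncomputable def threshold (c : ℝ) : ℝ := c ^ 2 * (1 - c) / (1 + c) ^ 3

lemma hasDerivAt_threshold {x : ℝ} (hx : 1 + x ≠ 0) :
    HasDerivAt threshold (2 * x * (1 - 2 * x) / (1 + x) ^ 4) x := by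
  have h := ((hasDerivAt_pow 2 x).mul ((hasDerivAt_id x).const_sub 1)).div
    (((hasDerivAt_id x).const_add 1).pow 3) (pow_ne_zero 3 hx)
  refine h.congr_deriv ?_
  simp only [id, Pi.mul_apply, Pi.pow_apply]
  field_simp
  ring

lemma continuousOn_threshold : ContinuousOn threshold (Icc 0 1) :=
  fun x hx => (hasDerivAt_threshold (by linarith [hx.1])).continuousAt.continuousWithinAt

lemma strictMonoOn_threshold : StrictMonoOn threshold (Icc 0 (1 / 2)) := by
  refine strictMonoOn_of_hasDerivWithinAt_pos (convex_Icc _ _)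
    (continuousOn_threshold.mono (Icc_subset_Icc le_rfl (by norm_num)))
    (fun x hx => (hasDerivAt_threshold ?_).hasDerivWithinAt) fun x hx => ?_
  all_goals rw [interior_Icc] at hx; obtain ⟨hx₀, hx₁⟩ := hx
  · linarith
  · exact div_pos (by nlinarith) (by positivity)

lemma strictAntiOn_threshold : StrictAntiOn threshold (Icc (1 / 2) 1) := by
  refine strictAntiOn_of_hasDerivWithinAt_neg (convex_Icc _ _)
    (continuousOn_threshold.mono (Icc_subset_Icc (by norm_num) le_rfl))
    (fun x hx => (hasDerivAt_threshold ?_).hasDerivWithinAt) fun x hx => ?_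
  all_goals rw [interior_Icc] at hx; obtain ⟨hx₀, hx₁⟩ := hx
  · linarith
  · exact div_neg_of_neg_of_pos (by nlinarith) (by positivity)

lemma exists_threshold_crossings {k : ℝ} (hk₀ : 0 < k) (hk : k < 1 / 27) :
    ∃ c₂ c₁ : ℝ, 0 < c₂ ∧ c₂ < 1 / 2 ∧ 1 / 2 < c₁ ∧ c₁ < 1 ∧
      (∀ c ∈ Ioo c₂ c₁, k < threshold c) ∧ ∀ c ∈ Ioo 0 c₂ ∪ Ioo c₁ 1, threshold c < k := by
  obtain ⟨c₂, ⟨hc₂₀, hc₂⟩, hkc₂⟩ := intermediate_value_Ioo (by norm_num : (0 : ℝ) ≤ 1 / 2)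
    (continuousOn_threshold.mono (Icc_subset_Icc le_rfl (by norm_num)))
    (show k ∈ Ioo (threshold 0) (threshold (1 / 2)) by norm_num [threshold, hk₀, hk])
  obtain ⟨c₁, ⟨hc₁, hc₁₁⟩, hkc₁⟩ := intermediate_value_Ioo' (by norm_num : (1 : ℝ) / 2 ≤ 1)
    (continuousOn_threshold.mono (Icc_subset_Icc (by norm_num) le_rfl))
    (show k ∈ Ioo (threshold 1) (threshold (1 / 2)) by norm_num [threshold, hk₀, hk])
  have mem₂ : c₂ ∈ Icc (0 : ℝ) (1 / 2) := ⟨hc₂₀.le, hc₂.le⟩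
  have mem₁ : c₁ ∈ Icc (1 / 2 : ℝ) 1 := ⟨hc₁.le, hc₁₁.le⟩
  refine ⟨c₂, c₁, hc₂₀, hc₂, hc₁, hc₁₁, ?_, ?_⟩
  · rintro c ⟨hc₂c, hcc₁⟩
    rcases le_total c (1 / 2) with hc | hc
    · exact hkc₂ ▸ strictMonoOn_threshold mem₂ ⟨by linarith, hc⟩ hc₂c
    · exact hkc₁ ▸ strictAntiOn_threshold ⟨hc, by linarith⟩ mem₁ hcc₁
  · rintro c (⟨hc₀, hcc₂⟩ | ⟨hc₁c, hc₁'⟩)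
    · exact hkc₂ ▸ strictMonoOn_threshold ⟨hc₀.le, by linarith⟩ mem₂ hcc₂
    · exact hkc₁ ▸ strictAntiOn_threshold mem₁ ⟨by linarith, hc₁'.le⟩ hc₁c

lemma arccos_lt_iff_cos_lt {x θ : ℝ} (hx₁ : -1 ≤ x) (hx₂ : x ≤ 1) (hθ : θ ∈ Icc 0 π) :
    arccos x < θ ↔ cos θ < x := by
  conv_rhs => rw [← cos_arccos hx₁ hx₂]
  exact (strictAntiOn_cos.lt_iff_gt hθ ⟨arccos_nonneg x, arccos_le_pi x⟩).symm

lemma lt_arccos_iff_lt_cos {x θ : ℝ} (hx₁ : -1 ≤ x) (hx₂ : x ≤ 1) (hθ : θ ∈ Icc 0 π) :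
    θ < arccos x ↔ x < cos θ := by
  conv_rhs => rw [← cos_arccos hx₁ hx₂]
  exact (strictAntiOn_cos.lt_iff_gt ⟨arccos_nonneg x, arccos_le_pi x⟩ hθ).symm

noncomputable def gOne (a b θ : ℝ) : ℝ :=
  4 * (-a * sin θ * (1 + cos θ) + 2 * b * cos θ * (1 - cos θ))

section

variable {a b : ℝ}

lemma gOne_zero : gOne a b 0 = 0 := by simp [gOne]

lemma hasDerivAt_gOne_zero : HasDerivAt (gOne a b) (-8 * a) 0 := by
  have h := ((((hasDerivAt_sin 0).const_mul (-a)).mul ((hasDerivAt_cos 0).const_add 1)).add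
    (((hasDerivAt_cos 0).const_mul (2 * b)).mul ((hasDerivAt_cos 0).const_sub 1))).const_mul 4
  refine h.congr_deriv ?_
  norm_num
  ring

lemma gOne_neg_of_mem_Ico (ha : 0 < a) (hb : 0 ≤ b) {θ : ℝ} (hθ : θ ∈ Ico (π / 2) π) :
    gOne a b θ < 0 := by
  obtain ⟨hθ₁, hθ₂⟩ := hθ
  have hs : 0 < sin θ := sin_pos_of_pos_of_lt_pi (by linarith [pi_pos]) hθ₂
  have hc : cos θ ≤ 0 := cos_nonpos_of_pi_div_two_le_of_le hθ₁ (by linarith)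
  have hc₁ : -1 < cos θ := by nlinarith [sin_sq_add_cos_sq θ]
  unfold gOne
  nlinarith [mul_pos (mul_pos ha hs) (by linarith : (0:ℝ) < 1 + cos θ),
    mul_nonneg (mul_nonneg hb (neg_nonneg.2 hc)) (by linarith : (0:ℝ) ≤ 1 - cos θ)]

lemma gOne_mul_conj (hb : b ≠ 0) {θ : ℝ} (hθ : 1 + cos θ ≠ 0) :
    gOne a b θ * (2 * b * cos θ * (1 - cos θ) + a * sin θ * (1 + cos θ)) =
      16 * b ^ 2 * (1 - cos θ) * (1 + cos θ) ^ 3 * (threshold (cos θ) - a ^ 2 / (4 * b ^ 2)) := by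
  unfold gOne threshold
  field_simp
  linear_combination (-16) * a ^ 2 * (1 + cos θ) ^ 2 * sin_sq_add_cos_sq θ

lemma sign_gOne (ha : 0 ≤ a) (hb : 0 < b) {θ : ℝ} (hθ : θ ∈ Ioo 0 (π / 2)) :
    SignType.sign (gOne a b θ) = SignType.sign (threshold (cos θ) - a ^ 2 / (4 * b ^ 2)) := by
  have hs : 0 < sin θ := sin_pos_of_pos_of_lt_pi hθ.1 (by linarith [hθ.2, pi_pos])
  have hc : 0 < cos θ := cos_pos_of_mem_Ioo ⟨by linarith [hθ.1, pi_pos], hθ.2⟩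
  have hc₁ : 0 < 1 - cos θ := by nlinarith [sin_sq_add_cos_sq θ]
  have hconj : 0 < 2 * b * cos θ * (1 - cos θ) + a * sin θ * (1 + cos θ) := by positivity
  have hfactor : 0 < 16 * b ^ 2 * (1 - cos θ) * (1 + cos θ) ^ 3 := by positivity
  have h := congrArg SignType.sign (gOne_mul_conj (a := a) hb.ne' (θ := θ) (by positivity))
  rwa [sign_mul, sign_mul, sign_pos hconj, sign_pos hfactor, mul_one, one_mul] at h

lemma gOne_pos_of_lt_threshold (ha : 0 ≤ a) (hb : 0 < b) {θ : ℝ} (hθ : θ ∈ Ioo 0 (π / 2))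
    (h : a ^ 2 / (4 * b ^ 2) < threshold (cos θ)) : 0 < gOne a b θ :=
  sign_eq_one_iff.mp ((sign_gOne ha hb hθ).trans (sign_pos (sub_pos.2 h)))

lemma gOne_neg_of_threshold_lt (ha : 0 ≤ a) (hb : 0 < b) {θ : ℝ} (hθ : θ ∈ Ioo 0 (π / 2))
    (h : threshold (cos θ) < a ^ 2 / (4 * b ^ 2)) : gOne a b θ < 0 :=
  sign_eq_neg_one_iff.mp ((sign_gOne ha hb hθ).trans (sign_neg (sub_neg.2 h)))

lemma exists_gOne_sign_intervals (ha : 0 < a) (hb : 0 < b) (hab : a ^ 2 / (4 * b ^ 2) < 1 / 27) :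
    ∃ α β : ℝ, 0 < α ∧ α < π / 3 ∧ π / 3 < β ∧ β < π / 2 ∧
      (∀ θ ∈ Ioo α β, 0 < gOne a b θ) ∧ ∀ θ ∈ Ioo 0 α ∪ Ioo β π, gOne a b θ < 0 := by
  obtain ⟨c₂, c₁, hc₂₀, hc₂, hc₁, hc₁₁, hpos, hneg⟩ :=
    exists_threshold_crossings (by positivity) hab
  have arccos_half : arccos (1 / 2) = π / 3 := by
    rw [← cos_pi_div_three, arccos_cos (by positivity) (by linarith [pi_pos])]
  have hα : arccos c₁ < π / 3 := arccos_half ▸ arccos_lt_arccos (by norm_num) hc₁ hc₁₁.le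
  have hβ : π / 3 < arccos c₂ := arccos_half ▸ arccos_lt_arccos (by linarith) hc₂ (by norm_num)
  have hβ' : arccos c₂ < π / 2 := arccos_lt_pi_div_two.2 hc₂₀
  refine ⟨arccos c₁, arccos c₂, arccos_pos.2 hc₁₁, hα, hβ, hβ', ?_, ?_⟩
  · rintro θ ⟨hθα, hθβ⟩
    have hθ₀ : 0 < θ := (arccos_nonneg _).trans_lt hθα
    have hθ : θ ∈ Icc 0 π := ⟨hθ₀.le, by linarith [pi_pos]⟩
    refine gOne_pos_of_lt_threshold ha.le hb ⟨hθ₀, by linarith⟩ (hpos _ ⟨?_, ?_⟩)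
    · exact (lt_arccos_iff_lt_cos (by linarith) (by linarith) hθ).1 hθβ
    · exact (arccos_lt_iff_cos_lt (by linarith) hc₁₁.le hθ).1 hθα
  · rintro θ (⟨hθ₀, hθα⟩ | ⟨hθβ, hθπ⟩)
    · have hθ : θ ∈ Icc 0 π := ⟨hθ₀.le, by linarith [pi_pos]⟩
      refine gOne_neg_of_threshold_lt ha.le hb ⟨hθ₀, by linarith⟩ (hneg _ (Or.inr ⟨?_, ?_⟩))
      · exact (lt_arccos_iff_lt_cos (by linarith) hc₁₁.le hθ).1 hθα
      · exact (arccos_lt_iff_cos_lt (by norm_num) le_rfl hθ).1 (by rwa [arccos_one])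
    · rcases lt_or_ge θ (π / 2) with hθ₂ | hθ₂
      · have hθ₀ : 0 < θ := (arccos_nonneg _).trans_lt hθβ
        have hθ : θ ∈ Icc 0 π := ⟨hθ₀.le, hθπ.le⟩
        refine gOne_neg_of_threshold_lt ha.le hb ⟨hθ₀, hθ₂⟩ (hneg _ (Or.inl ⟨?_, ?_⟩))
        · exact cos_pos_of_mem_Ioo ⟨by linarith, hθ₂⟩
        · exact (arccos_lt_iff_cos_lt (by linarith) (by linarith) hθ).1 hθβ
      · exact gOne_neg_of_mem_Ico ha hb.le ⟨hθ₂, hθπ⟩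

end

theorem stmt_15 (a b : ℝ) (ha : 0 < a) (hb : 0 < b) (hab : a ^ 2 / (4 * b ^ 2) < 1 / 27) :
    let g₁ : ℝ → ℝ := fun θ =>
      4 * (-a * Real.sin θ * (1 + Real.cos θ) + 2 * b * Real.cos θ * (1 - Real.cos θ))
    g₁ 0 = 0 ∧ deriv g₁ 0 = -8 * a ∧ -8 * a < 0 ∧
    (∀ θ ∈ Set.Ico (π / 2) π, g₁ θ < 0) ∧
    ∃ α β : ℝ, 0 < α ∧ α < π / 3 ∧ π / 3 < β ∧ β < π / 2 ∧
      (∀ θ ∈ Set.Ioo α β, 0 < g₁ θ) ∧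
      (∀ θ ∈ Set.Ioo 0 α ∪ Set.Ioo β π, g₁ θ < 0) := by
  intro g₁
  exact ⟨gOne_zero (b := b), (hasDerivAt_gOne_zero (a := a) (b := b)).deriv, by linarith,
    fun θ => gOne_neg_of_mem_Ico ha hb.le, exists_gOne_sign_intervals ha hb hab⟩
end
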